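/- Let (P, w, d) be weighted differential, let p ∈ P, and let a be a point that covers exactly p. Then the set of points covering exactly a is finite and the sum of the weights of the points covering exactly a equals 2·w(a) − w(p). -/

import Mathlib

/-- A finite lower set of a poset: a finite set closed downward. -/
def IsFinLowerSet {P : Type*} [PartialOrder P] (I : Set P) : Prop :=
  I.Finite ∧ ∀ ⦃q p : P⦄, q ≤ p → p ∈ I → q ∈ I

/-- The insertion points of a set `I`: the points not in `I` all of whose
strict lower bounds lie in `I` (the minimal elements of the complement). -/
def insPts {P : Type*} [PartialOrder P] (I : Set P) : Set P :=
  {x | x ∉ I ∧ ∀ y : P, y < x → y ∈ I}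

/-- The deletion points of a set `I`: its maximal elements. -/
def delPts {P : Type*} [PartialOrder P] (I : Set P) : Set P :=
  {x | x ∈ I ∧ ∀ y ∈ I, ¬ x < y}

/-- `(P, w, d)` is weighted differential: every principal lower set is finite,
all weights are positive, `d` is positive, and for every finite lower set `I`
the set of insertion points is finite and the total weight of insertion points
equals the total weight of deletion points plus `d`. -/
def WeightedDifferential {P : Type*} [PartialOrder P] (w : P → ℤ) (d : ℤ) : Prop :=
  (∀ p : P, {q : P | q ≤ p}.Finite) ∧ (∀ p : P, 0 < w p) ∧ 0 < d ∧
    ∀ I : Set P, IsFinLowerSet I →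
      (insPts I).Finite ∧ (∑ᶠ x ∈ insPts I, w x) = (∑ᶠ x ∈ delPts I, w x) + d

/-- `a` covers exactly `p`: the set of lower covers of `a` is precisely `{p}`. -/
def CoversExactly {P : Type*} [PartialOrder P] (a p : P) : Prop :=
  {x : P | x ⋖ a} = {p}

/-! Apply the differential relation to the principal lower sets `↓p` and `↓a`.
Since `a` covers exactly `p`, the strict lower set of `a` is `↓p`, so `↓a = ↓p ∪ {a}`.
The insertion points of `↓a` are then those of `↓p` other than `a`, together with the points
whose strict lower set is exactly `↓a`, i.e. the points covering exactly `a`. Subtracting the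
two relations `Σ ins(↓a) = w a + d` and `Σ ins(↓p) = w p + d` gives the claim. -/

open Set

section Order

variable {P : Type*} [PartialOrder P] {a p : P}

lemma exists_le_covBy_of_lt_of_finite_Iic {x y : P} (hy : (Iic y).Finite) (h : x < y) :
    ∃ z, x ≤ z ∧ z ⋖ y := by
  obtain ⟨z, hxz, hz⟩ :=
    (hy.subset (Ico_subset_Iio_self.trans Iio_subset_Iic_self)).exists_le_maximal
      (left_mem_Ico.2 h)
  exact ⟨z, hxz, hz.1.2, fun c hzc hcy => hzc.not_ge (hz.2 ⟨hxz.trans hzc.le, hcy⟩ hzc.le)⟩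

lemma CoversExactly.covBy_iff (h : CoversExactly a p) {x : P} : x ⋖ a ↔ x = p :=
  Set.ext_iff.1 h x

lemma CoversExactly.Iio_eq_Iic (h : CoversExactly a p) (ha : (Iic a).Finite) :
    Iio a = Iic p := by
  ext y
  refine ⟨fun hy => ?_, fun hy => lt_of_le_of_lt hy (h.covBy_iff.2 rfl).lt⟩
  obtain ⟨z, hyz, hz⟩ := exists_le_covBy_of_lt_of_finite_Iic ha hy
  exact h.covBy_iff.1 hz ▸ hyz

lemma lt_iff_le_of_Iio_eq_Iic (h : Iio a = Iic p) {y : P} : y < a ↔ y ≤ p :=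
  Set.ext_iff.1 h y

lemma coversExactly_of_Iio_eq_Iic (h : Iio a = Iic p) : CoversExactly a p := by
  have hpa : p < a := (lt_iff_le_of_Iio_eq_Iic h).2 le_rfl
  ext x
  refine ⟨fun hx => ?_, fun hx => ?_⟩
  · by_contra hne
    exact hx.2 (((lt_iff_le_of_Iio_eq_Iic h).1 hx.lt).lt_of_ne hne) hpa
  · rw [mem_singleton_iff.1 hx]
    exact ⟨hpa, fun c hpc hca => ((lt_iff_le_of_Iio_eq_Iic h).1 hca).not_gt hpc⟩

lemma coversExactly_iff_Iio_eq_Iic (ha : (Iic a).Finite) :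
    CoversExactly a p ↔ Iio a = Iic p :=
  ⟨fun h => h.Iio_eq_Iic ha, coversExactly_of_Iio_eq_Iic⟩

lemma isFinLowerSet_Iic (hp : (Iic p).Finite) : IsFinLowerSet (Iic p) :=
  ⟨hp, fun _ _ hqr hr => hqr.trans hr⟩

lemma delPts_Iic (p : P) : delPts (Iic p) = {p} := by
  ext x
  refine ⟨fun hx => ?_, fun hx => ?_⟩
  · by_contra hne
    exact hx.2 p le_rfl (lt_of_le_of_ne hx.1 hne)
  · rw [mem_singleton_iff.1 hx]
    exact ⟨le_rfl, fun y hy hxy => hxy.not_ge hy⟩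

lemma mem_insPts_of_Iio_eq_Iic (h : Iio a = Iic p) : a ∈ insPts (Iic p) :=
  ⟨fun hap => ((lt_iff_le_of_Iio_eq_Iic h).2 hap).false,
    fun _ hy => (lt_iff_le_of_Iio_eq_Iic h).1 hy⟩

lemma insPts_Iic_of_Iio_eq_Iic (h : Iio a = Iic p) :
    insPts (Iic a) = {b | Iio b = Iic a} ∪ (insPts (Iic p) \ {a}) := by
  have hlt : ∀ {y}, y < a ↔ y ≤ p := lt_iff_le_of_Iio_eq_Iic h
  have hpa : p < a := hlt.2 le_rfl
  ext x
  refine ⟨fun ⟨hxa, hbelow⟩ => ?_, ?_⟩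
  · by_cases hax : a < x
    · exact Or.inl (Subset.antisymm hbelow fun y hy => lt_of_le_of_lt hy hax)
    · refine Or.inr ⟨⟨fun hxp => hxa (hxp.trans hpa.le), fun y hy => ?_⟩, fun hx => hxa hx.le⟩
      rcases (hbelow y hy : y ≤ a).lt_or_eq with hya | rfl
      · exact hlt.1 hya
      · exact absurd hy hax
  · rintro (hx | ⟨⟨hxp, hbelow⟩, hxa⟩)
    · exact ⟨fun hxa => ((lt_iff_le_of_Iio_eq_Iic hx).2 hxa).false, hx.subset⟩
    · exact ⟨fun hxa' => hxp (hlt.1 (hxa'.lt_of_ne hxa)), fun y hy => (hbelow y hy).trans hpa.le⟩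

lemma disjoint_setOf_Iio_eq_Iic_insPts (h : Iio a = Iic p) :
    Disjoint {b | Iio b = Iic a} (insPts (Iic p)) := by
  refine disjoint_left.2 fun b hb hbp => ?_
  have hab : a < b := (lt_iff_le_of_Iio_eq_Iic hb).2 le_rfl
  exact (hbp.2 a hab).not_gt ((lt_iff_le_of_Iio_eq_Iic h).2 le_rfl)

end Order

/-- In a weighted differential poset, if `a` covers exactly
`p`, then the set of points covering exactly `a` is finite and the sum of
their weights equals `2 * w a - w p`. -/
theorem sum_covers_exactly_orphan {P : Type*} [PartialOrder P]
    (w : P → ℤ) (d : ℤ) (h : WeightedDifferential w d)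
    (p a : P) (ha : CoversExactly a p) :
    {b : P | CoversExactly b a}.Finite ∧
      (∑ᶠ b ∈ {b : P | CoversExactly b a}, w b) = 2 * w a - w p := by
  obtain ⟨hfin, -, -, hrel⟩ := h
  have hIio : Iio a = Iic p := ha.Iio_eq_Iic (hfin a)
  have hC : {b : P | CoversExactly b a} = {b | Iio b = Iic a} :=
    ext fun b => coversExactly_iff_Iio_eq_Iic (hfin b)
  obtain ⟨finA, sumA⟩ := hrel _ (isFinLowerSet_Iic (hfin a))
  obtain ⟨finP, sumP⟩ := hrel _ (isFinLowerSet_Iic (hfin p))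
  rw [insPts_Iic_of_Iio_eq_Iic hIio] at finA sumA
  rw [delPts_Iic, finsum_mem_singleton] at sumA sumP
  have finC : {b | Iio b = Iic a}.Finite := finA.subset subset_union_left
  rw [← insert_sdiff_self_of_mem (mem_insPts_of_Iio_eq_Iic hIio),
    finsum_mem_insert w (notMem_sdiff_of_mem (mem_singleton a)) finP.sdiff] at sumP
  rw [finsum_mem_union ((disjoint_setOf_Iio_eq_Iic_insPts hIio).mono_right sdiff_subset) finC
    finP.sdiff] at sumA
  rw [hC]
  exact ⟨finC, by linarith⟩
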